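/- In the Artin braid group B_n, with a_{i,j} = σ_{j-1}⋯σ_i and e_{k,l} = a_{k,l}a_{k+1,l}^{-1}, for every k with 2 < k ≤ ⌊(n+1)/2⌋ one has e_{k,n+2-k}·a_{1,n} = a_{1,n}·e_{k+1,n+3-k}. -/

import Mathlib

/-- `a_{i,j} = σ_{j-1} σ_{j-2} ⋯ σ_i`. -/
def aWord {G : Type*} [Group G] (σ : ℕ → G) (i j : ℕ) : G :=
  ((List.range (j - i)).map (fun t => σ (j - 1 - t))).prod

/-- `e_{k,l} = a_{k,l} a_{k+1,l}⁻¹`. -/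
def eWord {G : Type*} [Group G] (σ : ℕ → G) (k l : ℕ) : G :=
  aWord σ k l * (aWord σ (k + 1) l)⁻¹

/-!
Conjugation by `a_{1,n}` shifts the generators: `a_{1,n}⁻¹ σ_i a_{1,n} = σ_{i+1}` for
`1 ≤ i ≤ n - 2`, because `a_{1,n} = a_{i+2,n} (σ_{i+1} σ_i) a_{1,i}`, the outer factors commute
with `σ_i` resp. `σ_{i+1}`, and the braid relation turns `σ_i σ_{i+1} σ_i` into
`σ_{i+1} σ_i σ_{i+1}`. Conjugation is a homomorphism, so it maps `a_{k,l}` to `a_{k+1,l+1}` and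
`e_{k,l}` to `e_{k+1,l+1}` whenever `1 ≤ k` and `l < n`.
-/

section Words

variable {G : Type*} [Group G] (σ : ℕ → G)

theorem aWord_mul_aWord {i m j : ℕ} (him : i ≤ m) (hmj : m ≤ j) :
    aWord σ m j * aWord σ i m = aWord σ i j := by
  unfold aWord
  rw [show j - i = (j - m) + (m - i) by omega, List.range_add, List.map_append,
    List.prod_append, List.map_map]
  congr 2
  refine List.map_congr_left fun t ht => ?_
  rw [List.mem_range] at ht
  simp only [Function.comp_apply]
  congr 1
  omega

theorem aWord_self_add_two (i : ℕ) : aWord σ i (i + 2) = σ (i + 1) * σ i := by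
  simp [aWord, List.range_succ]

theorem Commute.aWord_right {x : G} {i j : ℕ} (h : ∀ t, i ≤ t → t < j → Commute x (σ t)) :
    Commute x (aWord σ i j) :=
  Commute.list_prod_right _ _ fun y hy => by
    obtain ⟨t, ht, rfl⟩ := List.mem_map.mp hy
    rw [List.mem_range] at ht
    exact h _ (by omega) (by omega)

end Words

theorem map_aWord {G H F : Type*} [Group G] [Group H] [FunLike F G H] [MonoidHomClass F G H]
    (f : F) {σ : ℕ → G} {τ : ℕ → H} {k l : ℕ}
    (h : ∀ t, k ≤ t → t < l → f (σ t) = τ (t + 1)) :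
    f (aWord σ k l) = aWord τ (k + 1) (l + 1) := by
  unfold aWord
  rw [map_list_prod, List.map_map, show l + 1 - (k + 1) = l - k by omega]
  congr 1
  refine List.map_congr_left fun t ht => ?_
  rw [List.mem_range] at ht
  simp only [Function.comp_apply]
  rw [h _ (by omega) (by omega)]
  congr 1
  omega

theorem map_eWord {G H F : Type*} [Group G] [Group H] [FunLike F G H] [MonoidHomClass F G H]
    (f : F) {σ : ℕ → G} {τ : ℕ → H} {k l : ℕ}
    (h : ∀ t, k ≤ t → t < l → f (σ t) = τ (t + 1)) :
    f (eWord σ k l) = eWord τ (k + 1) (l + 1) := by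
  unfold eWord
  rw [map_mul, map_inv, map_aWord f h, map_aWord f fun t ht => h t (by omega)]

theorem sigma_mul_aWord_one {G : Type*} [Group G] {n : ℕ} {σ : ℕ → G}
    (hcomm : ∀ i j : ℕ, 1 ≤ i → i + 1 < j → j ≤ n - 1 → σ i * σ j = σ j * σ i)
    (hbraid : ∀ i : ℕ, 1 ≤ i → i + 1 ≤ n - 1 →
      σ i * σ (i + 1) * σ i = σ (i + 1) * σ i * σ (i + 1))
    {i : ℕ} (h1 : 1 ≤ i) (h2 : i + 2 ≤ n) :
    σ i * aWord σ 1 n = aWord σ 1 n * σ (i + 1) := by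
  have hsplit : aWord σ 1 n = aWord σ (i + 2) n * (σ (i + 1) * σ i) * aWord σ 1 i := by
    rw [← aWord_self_add_two, mul_assoc, aWord_mul_aWord σ h1 (by omega),
      aWord_mul_aWord σ (by omega) h2]
  have hfar : Commute (σ i) (aWord σ (i + 2) n) :=
    Commute.aWord_right σ fun t ht1 ht2 => hcomm i t h1 (by omega) (by omega)
  have hnear : Commute (σ (i + 1)) (aWord σ 1 i) :=
    Commute.aWord_right σ fun t ht1 ht2 => (hcomm t (i + 1) ht1 (by omega) (by omega)).symm
  rw [hsplit]
  calc σ i * (aWord σ (i + 2) n * (σ (i + 1) * σ i) * aWord σ 1 i)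
      = aWord σ (i + 2) n * (σ i * σ (i + 1) * σ i) * aWord σ 1 i := by
        rw [← mul_assoc, ← mul_assoc, hfar.eq]; group
    _ = aWord σ (i + 2) n * (σ (i + 1) * σ i) * (σ (i + 1) * aWord σ 1 i) := by
        rw [hbraid i h1 (by omega)]; group
    _ = aWord σ (i + 2) n * (σ (i + 1) * σ i) * aWord σ 1 i * σ (i + 1) := by
        rw [hnear.eq]; group

/-- In the Artin braid group `B_n`, for every `k` with `2 < k ≤ ⌊(n+1)/2⌋` one has
`e_{k,n+2-k} · a_{1,n} = a_{1,n} · e_{k+1,n+3-k}`. -/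
theorem stmt_4 {G : Type*} [Group G] (n : ℕ) (σ : ℕ → G)
    (hcomm : ∀ i j : ℕ, 1 ≤ i → i + 1 < j → j ≤ n - 1 → σ i * σ j = σ j * σ i)
    (hbraid : ∀ i : ℕ, 1 ≤ i → i + 1 ≤ n - 1 →
      σ i * σ (i + 1) * σ i = σ (i + 1) * σ i * σ (i + 1))
    (k : ℕ) (hk : 2 < k) (hk' : k ≤ (n + 1) / 2) :
    eWord σ k (n + 2 - k) * aWord σ 1 n = aWord σ 1 n * eWord σ (k + 1) (n + 3 - k) := by
  have hshift : ∀ t, k ≤ t → t < n + 2 - k →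
      MulAut.conj (aWord σ 1 n)⁻¹ (σ t) = σ (t + 1) := by
    intro t hkt htl
    rw [MulAut.conj_apply, inv_inv, mul_assoc,
      sigma_mul_aWord_one hcomm hbraid (i := t) (by omega) (by omega), inv_mul_cancel_left]
  have hconj := map_eWord (MulAut.conj (aWord σ 1 n)⁻¹) hshift
  rw [show n + 3 - k = n + 2 - k + 1 by omega, ← hconj, MulAut.conj_apply, inv_inv]
  group
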